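/- arXiv:2512.04479 — 3 statements merged into one kernel-verified Lean document; each statement's English description precedes it below -/
import Mathlib

section
/- (Shield's change of variables) Let λ>0 and let f:[0,1]→[0,λ] be C² with f'>0 everywhere, f(0)=0, f(1)=λ, and let h=f⁻¹:[0,λ]→[0,1]. Then for every y∈[0,λ]: h'(y)=1/f'(h(y)) and h''(y)=−f''(h(y))/f'(h(y))³; moreover ∫₀^λ W*(h'(y))dy = ∫₀¹ W(f'(x))dx and, for every ε>0, ∫₀^λ((ε²/2)h''(y)² + W*(h'(y)))dy = ∫₀¹((ε²/2)·f''(x)²/f'(x)⁵ + W(f'(x)))dx. -/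
/-!
`h` is continuous as the inverse of a continuous map on a compact interval, so the easy half of
the inverse function theorem gives `h' = 1 / f' ∘ h`, and the chain rule gives
`h'' = -f'' ∘ h / (f' ∘ h)³`. Both integrands over `[0, λ]` have the form `g ∘ h` with `g`
continuous on `[0, 1]`, so the substitution `y = f x` turns them into integrals of `f' · g` over
`[0, 1]`; the factor `f'` cancels against `W*(1 / f') = W(f') / f'` and turns `(f'' / f'³)²`
into `f''² / f'⁵`.
-/

open Set MeasureTheory Filter

noncomputable section

/-- Second derivative. -/
def d2 (f : ℝ → ℝ) : ℝ → ℝ := deriv (deriv f)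

/-- Third derivative. -/
def d3 (f : ℝ → ℝ) : ℝ → ℝ := deriv (deriv (deriv f))

/-- Fourth derivative. -/
def d4 (f : ℝ → ℝ) : ℝ → ℝ := deriv (deriv (deriv (deriv f)))

/-- Surrogate for membership in the Sobolev space `H²(0,λ)` (which embeds in `C¹`):
`h` is `C¹` on `[0,λ]` and has a square-integrable second derivative. -/
def MemH2 (lam : ℝ) (h : ℝ → ℝ) : Prop :=
  ContDiffOn ℝ 1 h (Icc 0 lam) ∧
  IntervalIntegrable (fun y => (d2 h y) ^ 2) volume 0 lam

/-- The admissible set `𝒦`. -/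
def memK (lam : ℝ) (h : ℝ → ℝ) : Prop :=
  MemH2 lam h ∧ h 0 = 0 ∧ h lam = 1 ∧ ∀ y ∈ Icc (0:ℝ) lam, 0 ≤ deriv h y

/-- The transformed stored-energy density `W*(H) = H·W(1/H)` (equal to `0` at `H = 0`). -/
def Wstar (W : ℝ → ℝ) (H : ℝ) : ℝ := H * W (1 / H)

/-- Total energy `E*_ε[λ,h]`. -/
def energy (eps lam : ℝ) (Wst : ℝ → ℝ) (h : ℝ → ℝ) : ℝ :=
  ∫ y in (0:ℝ)..lam, ((eps ^ 2 / 2) * (d2 h y) ^ 2 + Wst (deriv h y))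

/-- The broken set `ℬ_h`. -/
def Bset (lam : ℝ) (h : ℝ → ℝ) : Set ℝ := {y | y ∈ Icc (0:ℝ) lam ∧ deriv h y = 0}

/-- The good set `𝒢_h`. -/
def Gset (lam : ℝ) (h : ℝ → ℝ) : Set ℝ := Icc (0:ℝ) lam \ Bset lam h

/-- A (nondegenerate) crack face of `h`. -/
def CrackFace (lam : ℝ) (h : ℝ → ℝ) (yc : ℝ) : Prop :=
  yc ∈ Icc (0:ℝ) lam ∧ deriv h yc = 0 ∧
  ∃ α > 0,
    (Ioo (yc - α) yc ⊆ Gset lam h ∧ Ico yc (yc + α) ⊆ Bset lam h) ∨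
    (Ioo yc (yc + α) ⊆ Gset lam h ∧ Ioc (yc - α) yc ⊆ Bset lam h)

/-- The Euler–Lagrange equation (EL): there is a nonnegative Radon measure `μ`
supported in the broken set such that the weak equation holds for all test
functions `ψ ∈ H²(0,λ) ∩ H¹₀(0,λ)`. -/
def EulerLagrange (eps lam : ℝ) (Sst : ℝ → ℝ) (h : ℝ → ℝ) (μ : Measure ℝ) : Prop :=
  μ ((Bset lam h)ᶜ) = 0 ∧
  ∀ ψ : ℝ → ℝ, MemH2 lam ψ → ψ 0 = 0 → ψ lam = 0 →
    (∫ y in (0:ℝ)..lam,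
        (eps ^ 2 * d2 h y * d2 ψ y + Sst (deriv h y) * deriv ψ y))
      = ∫ y in Bset lam h, deriv ψ y ∂μ

/-- The Euler–Lagrange variational inequality. -/
def ELineq (eps lam : ℝ) (Sst : ℝ → ℝ) (h : ℝ → ℝ) : Prop :=
  ∀ g : ℝ → ℝ, memK lam g →
    0 ≤ ∫ y in (0:ℝ)..lam,
      (eps ^ 2 * d2 h y * (d2 g y - d2 h y) + Sst (deriv h y) * (deriv g y - deriv h y))

/-- The space of admissible variations `𝒱_h`. -/
def memV (lam : ℝ) (h η : ℝ → ℝ) : Prop :=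
  MemH2 lam η ∧ η 0 = 0 ∧ η lam = 0 ∧
  (∀ y ∈ Bset lam h, 0 ≤ deriv η y) ∧
  ∀ yc : ℝ, CrackFace lam h yc → η yc = 0

/-- The restricted space of variations `𝒮_h`. -/
def memS (lam : ℝ) (h η : ℝ → ℝ) : Prop :=
  memV lam h η ∧ ∀ y ∈ Bset lam h, η y = 0 ∧ deriv η y = 0

/-- The second variation `δ²E*_ε[λ,h;η,η]`. -/
def secVar (eps lam : ℝ) (Mst : ℝ → ℝ) (h η : ℝ → ℝ) : ℝ :=
  ∫ y in (0:ℝ)..lam, (eps ^ 2 * (d2 η y) ^ 2 + Mst (deriv h y) * (deriv η y) ^ 2)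

/-- The `H²(0,λ)` norm (surrogate). -/
def H2norm (lam : ℝ) (η : ℝ → ℝ) : ℝ :=
  Real.sqrt (∫ y in (0:ℝ)..lam, ((η y) ^ 2 + (deriv η y) ^ 2 + (d2 η y) ^ 2))

/-- Hypotheses (H) on the stored-energy density `W`. -/
def HypW (W : ℝ → ℝ) (γ : ℝ) : Prop :=
  ContDiffOn ℝ 2 W (Ioi 0) ∧
  Tendsto W (nhdsWithin 0 (Ioi 0)) atTop ∧
  Tendsto W atTop (nhds γ) ∧
  MonotoneOn W (Ici 1) ∧
  0 < γ ∧ W 1 = 0 ∧ ∀ F : ℝ, 0 < F → F ≠ 1 → 0 < W F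

open Topology

theorem ContinuousOn.continuousOn_invOn_of_isCompact {X Y : Type*} [TopologicalSpace X]
    [TopologicalSpace Y] [T2Space Y] {f : X → Y} {g : Y → X} {s : Set X} {t : Set Y}
    (hs : IsCompact s) (hf : ContinuousOn f s) (hg : MapsTo g t s) (hfg : InvOn g f s t) :
    ContinuousOn g t := by
  refine continuousOn_iff_isClosed.2 fun C hC => ⟨f '' (C ∩ s), ?_, ?_⟩
  · exact ((hs.inter_left hC).image_of_continuousOn (hf.mono inter_subset_right)).isClosed
  · ext y
    constructor
    · rintro ⟨hyC, hyt⟩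
      exact ⟨⟨g y, ⟨hyC, hg hyt⟩, hfg.2 hyt⟩, hyt⟩
    · rintro ⟨⟨x, ⟨hxC, hxs⟩, rfl⟩, hyt⟩
      exact ⟨by simpa [mem_preimage, hfg.1 hxs] using hxC, hyt⟩

theorem mapsTo_Icc_of_hasDerivWithinAt_pos {a b : ℝ} {f f' : ℝ → ℝ}
    (hf : ∀ x ∈ Icc a b, HasDerivWithinAt f (f' x) (Icc a b) x)
    (hpos : ∀ x ∈ Icc a b, 0 < f' x) : MapsTo f (Icc a b) (Icc (f a) (f b)) :=
  (strictMonoOn_of_hasDerivWithinAt_pos (convex_Icc a b)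
    (fun x hx => (hf x hx).continuousWithinAt)
    (fun x hx => (hf x (interior_subset hx)).mono interior_subset)
    (fun x hx => hpos x (interior_subset hx))).monotoneOn.mapsTo_Icc

theorem HasDerivWithinAt.of_local_left_inverse {𝕜 : Type*} [NontriviallyNormedField 𝕜]
    {f g : 𝕜 → 𝕜} {f' a : 𝕜} {s t : Set 𝕜}
    (hg : Tendsto g (𝓝[s] a) (𝓝[t] (g a))) (hf : HasDerivWithinAt f f' t (g a)) (hf' : f' ≠ 0)
    (ha : a ∈ s) (hfg : ∀ᶠ x in 𝓝[s] a, f (g x) = x) : HasDerivWithinAt g f'⁻¹ s a :=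
  HasFDerivWithinAt.of_local_left_inverse
    (f' := ContinuousLinearEquiv.unitsEquivAut 𝕜 (Units.mk0 f' hf')) hg hf ha hfg

theorem hasDerivWithinAt_one_div_comp {φ h : ℝ → ℝ} {φ' y : ℝ} {s t : Set ℝ}
    (hφ : HasDerivWithinAt φ φ' s (h y)) (hh : HasDerivWithinAt h (1 / φ (h y)) t y)
    (hmap : MapsTo h t s) (hne : φ (h y) ≠ 0) :
    HasDerivWithinAt (fun z => 1 / φ (h z)) (-φ' / φ (h y) ^ 3) t y := by
  refine ((hasDerivWithinAt_const y t (1 : ℝ)).fun_div (hφ.comp y hh hmap) hne).congr_deriv ?_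
  simp only [Function.comp_apply]
  field_simp
  ring

theorem integral_comp_leftInvOn {a b c d : ℝ} {f f' h g : ℝ → ℝ} (hab : a ≤ b)
    (hfa : f a = c) (hfb : f b = d)
    (hf : ∀ x ∈ Icc a b, HasDerivWithinAt f (f' x) (Icc a b) x)
    (hf' : ContinuousOn f' (Icc a b)) (hfab : MapsTo f (Icc a b) (Icc c d))
    (hh : ContinuousOn h (Icc c d)) (hmap : MapsTo h (Icc c d) (Icc a b))
    (hhf : ∀ x ∈ Icc a b, h (f x) = x) (hg : ContinuousOn g (Icc a b)) :
    ∫ y in c..d, g (h y) = ∫ x in a..b, f' x * g x := by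
  subst hfa hfb
  have hfc : ContinuousOn f (uIcc a b) := by
    rw [uIcc_of_le hab]
    exact fun x hx => (hf x hx).continuousWithinAt
  have hderiv : ∀ x ∈ Ioo (min a b) (max a b), HasDerivWithinAt f (f' x) (Ioi x) x := by
    rw [min_eq_left hab, max_eq_right hab]
    intro x hx
    exact ((hf x (Ioo_subset_Icc_self hx)).hasDerivAt (Icc_mem_nhds hx.1 hx.2)).hasDerivWithinAt
  have hgh : ContinuousOn (g ∘ h) (f '' (uIcc a b)) := by
    rw [uIcc_of_le hab]
    exact (hg.comp hh hmap).mono (image_subset_iff.2 hfab)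
  refine (intervalIntegral.integral_comp_mul_deriv'' hfc hderiv
    (uIcc_of_le hab ▸ hf') hgh).symm.trans
    (intervalIntegral.integral_congr fun x hx => ?_)
  rw [uIcc_of_le hab] at hx
  simp only [Function.comp_apply, hhf x hx, mul_comm]

theorem Wstar_one_div (W : ℝ → ℝ) (x : ℝ) : Wstar W (1 / x) = 1 / x * W x := by
  rw [Wstar, one_div_one_div]

theorem ContinuousOn.Wstar_one_div {W u : ℝ → ℝ} {s : Set ℝ} (hW : ContinuousOn W (Ioi 0))
    (hu : ContinuousOn u s) (hpos : ∀ x ∈ s, 0 < u x) :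
    ContinuousOn (fun x => Wstar W (1 / u x)) s := by
  simp only [_root_.Wstar_one_div]
  exact (continuousOn_const.div hu fun x hx => (hpos x hx).ne').mul
    (hW.comp hu fun x hx => hpos x hx)

theorem stmt6_general
    (lam : ℝ)
    (W : ℝ → ℝ) (hWc : ContinuousOn W (Ioi 0))
    (f f' f'' : ℝ → ℝ)
    (hf1 : ∀ x ∈ Icc (0:ℝ) 1, HasDerivWithinAt f (f' x) (Icc 0 1) x)
    (hf2 : ∀ x ∈ Icc (0:ℝ) 1, HasDerivWithinAt f' (f'' x) (Icc 0 1) x)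
    (hf2c : ContinuousOn f'' (Icc 0 1))
    (hpos : ∀ x ∈ Icc (0:ℝ) 1, 0 < f' x)
    (hf0 : f 0 = 0) (hf1lam : f 1 = lam)
    (h : ℝ → ℝ) (hmap : MapsTo h (Icc 0 lam) (Icc 0 1))
    (hinv1 : ∀ x ∈ Icc (0:ℝ) 1, h (f x) = x)
    (hinv2 : ∀ y ∈ Icc (0:ℝ) lam, f (h y) = y) :
    (∀ y ∈ Icc (0:ℝ) lam,
      HasDerivWithinAt h (1 / f' (h y)) (Icc 0 lam) y) ∧
    (∀ y ∈ Icc (0:ℝ) lam,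
      HasDerivWithinAt (fun z => 1 / f' (h z))
        (-(f'' (h y)) / (f' (h y)) ^ 3) (Icc 0 lam) y) ∧
    (∫ y in (0:ℝ)..lam, Wstar W (1 / f' (h y)))
      = (∫ x in (0:ℝ)..1, W (f' x)) ∧
    (∀ eps : ℝ, 0 < eps →
      (∫ y in (0:ℝ)..lam,
          ((eps ^ 2 / 2) * (-(f'' (h y)) / (f' (h y)) ^ 3) ^ 2
            + Wstar W (1 / f' (h y))))
        = ∫ x in (0:ℝ)..1,
            ((eps ^ 2 / 2) * (f'' x) ^ 2 / (f' x) ^ 5 + W (f' x))) := by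
  have hfc : ContinuousOn f (Icc 0 1) := fun x hx => (hf1 x hx).continuousWithinAt
  have hf'c : ContinuousOn f' (Icc 0 1) := fun x hx => (hf2 x hx).continuousWithinAt
  have hmapf := mapsTo_Icc_of_hasDerivWithinAt_pos hf1 hpos
  rw [hf0, hf1lam] at hmapf
  have hhc : ContinuousOn h (Icc 0 lam) :=
    hfc.continuousOn_invOn_of_isCompact isCompact_Icc hmap ⟨hinv1, hinv2⟩
  have hderiv : ∀ y ∈ Icc (0:ℝ) lam, HasDerivWithinAt h (1 / f' (h y)) (Icc 0 lam) y :=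
    fun y hy => (one_div (f' (h y))).symm ▸ HasDerivWithinAt.of_local_left_inverse
      ((hhc y hy).tendsto_nhdsWithin hmap) (hf1 _ (hmap hy)) (hpos _ (hmap hy)).ne' hy
      (eventually_nhdsWithin_of_forall hinv2)
  have hne : ∀ x ∈ uIcc (0:ℝ) 1, f' x ≠ 0 := fun x hx =>
    (hpos x (uIcc_of_le (zero_le_one' ℝ) ▸ hx)).ne'
  have hsubst : ∀ g : ℝ → ℝ, ContinuousOn g (Icc 0 1) →
      ∫ y in (0:ℝ)..lam, g (h y) = ∫ x in (0:ℝ)..1, f' x * g x := fun g hg =>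
    integral_comp_leftInvOn zero_le_one hf0 hf1lam hf1 hf'c hmapf hhc hmap hinv1 hg
  have hWc' := hWc.Wstar_one_div hf'c hpos
  refine ⟨hderiv, fun y hy => hasDerivWithinAt_one_div_comp (hf2 _ (hmap hy)) (hderiv y hy)
    hmap (hpos _ (hmap hy)).ne', ?_, fun eps _ => ?_⟩
  · rw [hsubst _ hWc']
    refine intervalIntegral.integral_congr fun x hx => ?_
    have := hne x hx
    simp only [Wstar_one_div]
    field_simp
  · rw [hsubst (fun x => eps ^ 2 / 2 * (-f'' x / f' x ^ 3) ^ 2 + Wstar W (1 / f' x))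
      (continuousOn_const.mul ((hf2c.neg.div (hf'c.pow 3)
        fun x hx => pow_ne_zero 3 (hpos x hx).ne').pow 2) |>.add hWc')]
    refine intervalIntegral.integral_congr fun x hx => ?_
    have := hne x hx
    simp only [Wstar_one_div]
    field_simp

/-- Shield's change of variables: for a `C²` deformation `f` with
`f' > 0` and inverse `h`, the inverse strain and its derivative are as stated
and the transformed energies agree. -/
theorem stmt6
    (lam : ℝ) (hlam : 0 < lam)
    (W : ℝ → ℝ) (hWc : ContinuousOn W (Ioi 0))
    (f f' f'' : ℝ → ℝ)
    (hf1 : ∀ x ∈ Icc (0:ℝ) 1, HasDerivWithinAt f (f' x) (Icc 0 1) x)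
    (hf2 : ∀ x ∈ Icc (0:ℝ) 1, HasDerivWithinAt f' (f'' x) (Icc 0 1) x)
    (hf2c : ContinuousOn f'' (Icc 0 1))
    (hpos : ∀ x ∈ Icc (0:ℝ) 1, 0 < f' x)
    (hf0 : f 0 = 0) (hf1lam : f 1 = lam)
    (h : ℝ → ℝ) (hmap : MapsTo h (Icc 0 lam) (Icc 0 1))
    (hinv1 : ∀ x ∈ Icc (0:ℝ) 1, h (f x) = x)
    (hinv2 : ∀ y ∈ Icc (0:ℝ) lam, f (h y) = y) :
    (∀ y ∈ Icc (0:ℝ) lam,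
      HasDerivWithinAt h (1 / f' (h y)) (Icc 0 lam) y) ∧
    (∀ y ∈ Icc (0:ℝ) lam,
      HasDerivWithinAt (fun z => 1 / f' (h z))
        (-(f'' (h y)) / (f' (h y)) ^ 3) (Icc 0 lam) y) ∧
    (∫ y in (0:ℝ)..lam, Wstar W (1 / f' (h y)))
      = (∫ x in (0:ℝ)..1, W (f' x)) ∧
    (∀ eps : ℝ, 0 < eps →
      (∫ y in (0:ℝ)..lam,
          ((eps ^ 2 / 2) * (-(f'' (h y)) / (f' (h y)) ^ 3) ^ 2
            + Wstar W (1 / f' (h y))))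
        = ∫ x in (0:ℝ)..1,
            ((eps ^ 2 / 2) * (f'' x) ^ 2 / (f' x) ^ 5 + W (f' x))) :=
  stmt6_general lam W hWc f f' f'' hf1 hf2 hf2c hpos hf0 hf1lam h hmap hinv1 hinv2

end
end

section
/- (Corollary 4.3) Suppose W* extends to a C² function on ℝ, (h,μ) satisfies (EL), and let G_i=(r_i,s_i), i=1,…,N, be open, disjoint, connected subsets of 𝒢_h with r_i, s_i ∈ 𝒞_h ∪ {0,λ} and ∪_{i=1}^N G_i = 𝒢_h. If for each i ∈ {1,…,N} one has δ²E*_ε[λ,h;η_i,η_i] > 0 for every nonzero η_i ∈ 𝒮_h with supp η_i ⊆ closure(G_i), then δ²E*_ε[λ,h;η,η] > 0 for every nonzero η ∈ 𝒮_h. In particular, δ²E*_ε[λ,h;η,η] ≥ Σ_{i=1}^N δ²E*_ε[λ,h;η·1_{G_i}, η·1_{G_i}] for every η ∈ 𝒮_h. -/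
open Set MeasureTheory Filter

noncomputable section

/-!
An `η ∈ 𝒮_h` vanishes together with `η'` on `ℬ_h`, and a crack face bounding `G_i` has a
one-sided neighbourhood outside `G_i` contained in `ℬ_h`. Hence `η` vanishes just outside both
ends of `G_i`, so the cut-off `η·1_{G_i}` is still `C¹` and lies in `𝒮_h`, and its
second-variation density is that of `η` on `G_i` and `0` elsewhere (except at the endpoints).
On `[0,λ] ∖ ⋃ G_i = ℬ_h` the density of `η` is `ε²η''² ≥ 0`. Therefore
`δ²E[η] ≥ Σ δ²E[η·1_{G_i}]`; each term is `≥ 0` by the stability of `G_i`, and it is `> 0` for a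
`G_i` on which `η ≠ 0`.
-/

open Function
open scoped Topology

section IndicatorDeriv

variable {𝕜 F : Type*} [NontriviallyNormedField 𝕜] [NormedAddCommGroup F] [NormedSpace 𝕜 F]

theorem deriv_indicator_of_notMem_frontier {f : 𝕜 → F} {s : Set 𝕜} {x : 𝕜}
    (hx : x ∉ frontier s) : deriv (s.indicator f) x = s.indicator (deriv f) x := by
  rw [← mem_compl_iff, compl_frontier_eq_union_interior] at hx
  rcases hx with hx | hx
  · rw [indicator_of_mem (interior_subset hx),
      (eventuallyEq_of_mem (mem_interior_iff_mem_nhds.1 hx) eqOn_indicator).deriv_eq]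
  · rw [indicator_of_notMem (interior_subset hx : x ∈ sᶜ),
      (eventuallyEq_of_mem (mem_interior_iff_mem_nhds.1 hx) eqOn_indicator').deriv_eq,
      Pi.zero_def, deriv_const]

theorem deriv_indicator_eventuallyEq {f : 𝕜 → F} {s : Set 𝕜} {x : 𝕜}
    (hx : x ∉ frontier s) : deriv (s.indicator f) =ᶠ[𝓝 x] s.indicator (deriv f) :=
  eventuallyEq_of_mem (isClosed_frontier.isOpen_compl.mem_nhds hx)
    fun _ hy ↦ deriv_indicator_of_notMem_frontier hy

end IndicatorDeriv

theorem d2_indicator_of_notMem_frontier {f : ℝ → ℝ} {s : Set ℝ} {x : ℝ}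
    (hx : x ∉ frontier s) : d2 (s.indicator f) x = s.indicator (d2 f) x := by
  rw [d2, d2, (deriv_indicator_eventuallyEq hx).deriv_eq, deriv_indicator_of_notMem_frontier hx]

theorem indicator_Ioo_eventuallyEq_zero {M : Type*} [Zero M] {f : ℝ → M} {a b x : ℝ}
    (hx : x ∉ Icc a b) : (Ioo a b).indicator f =ᶠ[𝓝 x] 0 :=
  eventuallyEq_of_mem (isClosed_Icc.isOpen_compl.mem_nhds hx)
    fun _ hz ↦ indicator_of_notMem (fun hz' ↦ hz (Ioo_subset_Icc_self hz')) f

section IndicatorIoo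

variable {F : Type*} [NormedAddCommGroup F] [NormedSpace ℝ F] {f : ℝ → F} {a b : ℝ}

-- `deriv f x = 0` by convention where `f` is not differentiable.
theorem deriv_eq_zero_of_eqOn_Iic {x : ℝ} (hf : EqOn f 0 (Iic x)) : deriv f x = 0 := by
  by_cases hd : DifferentiableAt ℝ f x
  · rw [← hd.derivWithin (uniqueDiffWithinAt_Iic x), derivWithin_congr hf (hf self_mem_Iic),
      derivWithin_zero, Pi.zero_apply]
  · exact deriv_zero_of_not_differentiableAt hd

theorem deriv_eq_zero_of_eqOn_Ici {x : ℝ} (hf : EqOn f 0 (Ici x)) : deriv f x = 0 := by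
  by_cases hd : DifferentiableAt ℝ f x
  · rw [← hd.derivWithin (uniqueDiffWithinAt_Ici x), derivWithin_congr hf (hf self_mem_Ici),
      derivWithin_zero, Pi.zero_apply]
  · exact deriv_zero_of_not_differentiableAt hd

theorem deriv_indicator_Ioo_of_notMem {x : ℝ} (hx : x ∉ Ioo a b) :
    deriv ((Ioo a b).indicator f) x = 0 := by
  rcases le_or_gt x a with hxa | hax
  · exact deriv_eq_zero_of_eqOn_Iic fun z hz ↦
      indicator_of_notMem (fun hz' ↦ (hz'.1.trans_le (mem_Iic.1 hz)).not_ge hxa) f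
  · have hbx : b ≤ x := not_lt.1 fun hxb ↦ hx ⟨hax, hxb⟩
    exact deriv_eq_zero_of_eqOn_Ici fun z hz ↦
      indicator_of_notMem (fun hz' ↦ (hbx.trans (mem_Ici.1 hz)).not_gt hz'.2) f

theorem contDiffOn_indicator_Ioo {n : WithTop ℕ∞} {s : Set ℝ} {a' b' : ℝ} (ha : a' < a)
    (hb : b < b') (hf : ContDiffOn ℝ n f s) (hfa : EqOn f 0 (s ∩ Ioc a' a))
    (hfb : EqOn f 0 (s ∩ Ico b b')) : ContDiffOn ℝ n ((Ioo a b).indicator f) s := by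
  have heq : EqOn ((Ioo a b).indicator f) f (s ∩ Ioo a' b') := by
    rintro z ⟨hzs, hz⟩
    by_cases hzab : z ∈ Ioo a b
    · exact indicator_of_mem hzab f
    rw [indicator_of_notMem hzab]
    rcases le_or_gt z a with hza | hza
    · exact (hfa ⟨hzs, hz.1, hza⟩).symm
    · exact (hfb ⟨hzs, not_lt.1 fun hzb ↦ hzab ⟨hza, hzb⟩, hz.2⟩).symm
  intro x hx
  by_cases hxab : x ∈ Icc a b
  · exact (hf x hx).congr_of_eventuallyEq_of_mem (eventuallyEq_of_mem
      (inter_mem_nhdsWithin s (Ioo_mem_nhds (ha.trans_le hxab.1) (hxab.2.trans_lt hb))) heq) hx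
  · exact (contDiffAt_const.congr_of_eventuallyEq
      (indicator_Ioo_eventuallyEq_zero hxab)).contDiffWithinAt

end IndicatorIoo

theorem continuous_of_hasDerivAt_of_contDiff_two {W S M : ℝ → ℝ} (hW : ContDiff ℝ 2 W)
    (hS : ∀ x, HasDerivAt W (S x) x) (hM : ∀ x, HasDerivAt S (M x) x) : Continuous M := by
  have hWS : deriv W = S := funext fun x ↦ (hS x).deriv
  have hSM : deriv S = M := funext fun x ↦ (hM x).deriv
  rw [← hSM, ← hWS]
  exact (hW.deriv' (n := 1)).continuous_deriv_one

theorem setIntegral_le_setIntegral_of_nonneg_on_sdiff {α : Type*} [MeasurableSpace α]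
    {μ : Measure α} {f : α → ℝ} {s t : Set α} (hs : MeasurableSet s) (ht : MeasurableSet t)
    (hst : s ⊆ t) (hft : IntegrableOn f t μ) (hf : ∀ x ∈ t \ s, 0 ≤ f x) :
    ∫ x in s, f x ∂μ ≤ ∫ x in t, f x ∂μ := by
  have hdiff := setIntegral_nonneg (μ := μ) (ht.diff hs) hf
  rw [setIntegral_sdiff hs hft hst] at hdiff
  linarith

def secVarDensity (eps : ℝ) (Mst h η : ℝ → ℝ) (y : ℝ) : ℝ :=
  eps ^ 2 * (d2 η y) ^ 2 + Mst (deriv h y) * (deriv η y) ^ 2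

theorem secVar_eq_integral_secVarDensity (eps lam : ℝ) (Mst h η : ℝ → ℝ) :
    secVar eps lam Mst h η = ∫ y in (0:ℝ)..lam, secVarDensity eps Mst h η y :=
  rfl

theorem secVarDensity_nonneg_of_deriv_eq_zero {eps : ℝ} {Mst h η : ℝ → ℝ} {y : ℝ}
    (hy : deriv η y = 0) : 0 ≤ secVarDensity eps Mst h η y := by
  rw [secVarDensity, hy, zero_pow two_ne_zero, mul_zero, add_zero]
  positivity

theorem secVarDensity_indicator_ae {s : Set ℝ} (hs : volume (frontier s) = 0) (eps : ℝ)
    (Mst h η : ℝ → ℝ) :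
    secVarDensity eps Mst h (s.indicator η)
      =ᵐ[volume] s.indicator (secVarDensity eps Mst h η) := by
  filter_upwards [measure_eq_zero_iff_ae_notMem.1 hs] with y hy
  rw [secVarDensity, deriv_indicator_of_notMem_frontier hy, d2_indicator_of_notMem_frontier hy]
  by_cases hys : y ∈ s <;> simp [hys, secVarDensity]

theorem intervalIntegrable_sq_d2_indicator {s : Set ℝ} (hs : MeasurableSet s)
    (hfr : volume (frontier s) = 0) {f : ℝ → ℝ} {a b : ℝ}
    (hf : IntervalIntegrable (fun y ↦ (d2 f y) ^ 2) volume a b) :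
    IntervalIntegrable (fun y ↦ (d2 (s.indicator f) y) ^ 2) volume a b := by
  rw [intervalIntegrable_iff] at hf ⊢
  refine (hf.indicator hs).congr (ae_restrict_of_ae ?_)
  filter_upwards [measure_eq_zero_iff_ae_notMem.1 hfr] with y hy
  rw [d2_indicator_of_notMem_frontier hy]
  by_cases hys : y ∈ s <;> simp [hys]

theorem integrableOn_secVarDensity {eps lam : ℝ} (hlam : 0 < lam) {Mst h η : ℝ → ℝ}
    (hM : Continuous Mst) (hh : MemH2 lam h) (hη : MemH2 lam η) :
    IntegrableOn (secVarDensity eps Mst h η) (Ioc 0 lam) := by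
  have hd2 : IntegrableOn (fun y ↦ eps ^ 2 * (d2 η y) ^ 2) (Ioc 0 lam) := by
    have := hη.2.const_mul (eps ^ 2)
    rwa [intervalIntegrable_iff, uIoc_of_le hlam.le] at this
  have hderiv : IntegrableOn (fun y ↦ Mst (deriv h y) * (deriv η y) ^ 2) (Ioc 0 lam) := by
    rw [integrableOn_Ioc_iff_integrableOn_Ioo]
    have hcont : ContinuousOn
        (fun y ↦ Mst (derivWithin h (Icc 0 lam) y) * (derivWithin η (Icc 0 lam) y) ^ 2)
        (Icc 0 lam) :=
      (hM.comp_continuousOn (hh.1.continuousOn_derivWithin (uniqueDiffOn_Icc hlam) le_rfl)).mul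
        ((hη.1.continuousOn_derivWithin (uniqueDiffOn_Icc hlam) le_rfl).pow 2)
    refine (hcont.integrableOn_Icc.mono_set Ioo_subset_Icc_self).congr_fun (fun y hy ↦ ?_)
      measurableSet_Ioo
    simp only [derivWithin_of_mem_nhds (Icc_mem_nhds hy.1 hy.2)]
  exact hd2.add hderiv

theorem secVar_nonneg_of_pos {eps lam : ℝ} {Mst h η : ℝ → ℝ}
    (hsupp : support η ⊆ Icc 0 lam)
    (hpos : (∃ y ∈ Icc (0:ℝ) lam, η y ≠ 0) → 0 < secVar eps lam Mst h η) :
    0 ≤ secVar eps lam Mst h η := by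
  by_cases hne : ∃ y ∈ Icc (0:ℝ) lam, η y ≠ 0
  · exact (hpos hne).le
  · obtain rfl : η = 0 := funext fun y ↦ by_contra fun hy ↦ hne ⟨y, hsupp hy, hy⟩
    simp [secVar, d2]

section Pieces

variable {lam : ℝ} {h η : ℝ → ℝ} {a b : ℝ}

theorem nonneg_and_le_of_Ioo_subset_Gset (hab : a < b) (hG : Ioo a b ⊆ Gset lam h) :
    0 ≤ a ∧ b ≤ lam := by
  refine (Icc_subset_Icc_iff hab.le).1 ?_
  rw [← closure_Ioo hab.ne]
  exact closure_minimal (fun y hy ↦ (hG hy).1) isClosed_Icc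

theorem CrackFace.exists_Ioc_subset_Bset (ha : CrackFace lam h a) (hab : a < b)
    (hG : Ioo a b ⊆ Gset lam h) : ∃ a' < a, Ioc a' a ⊆ Bset lam h := by
  obtain ⟨-, -, α, hα, ⟨-, hB⟩ | ⟨-, hB⟩⟩ := ha
  · have hm := lt_min hα (sub_pos.2 hab)
    have hmα := min_le_left α (b - a)
    have hmba := min_le_right α (b - a)
    have ht : a + min α (b - a) / 2 ∈ Ioo a b := by constructor <;> linarith
    exact ((hG ht).2 (hB ⟨by linarith, by linarith⟩)).elim
  · exact ⟨a - α, by linarith, hB⟩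

theorem CrackFace.exists_Ico_subset_Bset (hb : CrackFace lam h b) (hab : a < b)
    (hG : Ioo a b ⊆ Gset lam h) : ∃ b' > b, Ico b b' ⊆ Bset lam h := by
  obtain ⟨-, -, α, hα, ⟨-, hB⟩ | ⟨-, hB⟩⟩ := hb
  · exact ⟨b + α, by linarith, hB⟩
  · have hm := lt_min hα (sub_pos.2 hab)
    have hmα := min_le_left α (b - a)
    have hmba := min_le_right α (b - a)
    have ht : b - min α (b - a) / 2 ∈ Ioo a b := by constructor <;> linarith
    exact ((hG ht).2 (hB ⟨by linarith, by linarith⟩)).elim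

theorem memS.exists_eqOn_zero_left (hη : memS lam h η) (ha : CrackFace lam h a ∨ a = 0)
    (hab : a < b) (hG : Ioo a b ⊆ Gset lam h) :
    ∃ a' < a, EqOn η 0 (Icc 0 lam ∩ Ioc a' a) := by
  rcases ha with ha | rfl
  · obtain ⟨a', ha', hB⟩ := ha.exists_Ioc_subset_Bset hab hG
    exact ⟨a', ha', fun y hy ↦ (hη.2 y (hB hy.2)).1⟩
  · refine ⟨-1, by norm_num, fun y hy ↦ ?_⟩
    rw [le_antisymm hy.2.2 hy.1.1]
    exact hη.1.2.1

theorem memS.exists_eqOn_zero_right (hη : memS lam h η) (hb : CrackFace lam h b ∨ b = lam)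
    (hab : a < b) (hG : Ioo a b ⊆ Gset lam h) :
    ∃ b' > b, EqOn η 0 (Icc 0 lam ∩ Ico b b') := by
  rcases hb with hb | rfl
  · obtain ⟨b', hb', hB⟩ := hb.exists_Ico_subset_Bset hab hG
    exact ⟨b', hb', fun y hy ↦ (hη.2 y (hB hy.2)).1⟩
  · refine ⟨b + 1, by linarith, fun y hy ↦ ?_⟩
    rw [le_antisymm hy.1.2 hy.2.1]
    exact hη.1.2.2.1

theorem memS_indicator_Ioo (hab : a < b) (hG : Ioo a b ⊆ Gset lam h)
    (ha : CrackFace lam h a ∨ a = 0 ∨ a = lam) (hb : CrackFace lam h b ∨ b = 0 ∨ b = lam)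
    (hη : memS lam h η) : memS lam h ((Ioo a b).indicator η) := by
  obtain ⟨h0a, hbl⟩ := nonneg_and_le_of_Ioo_subset_Gset hab hG
  obtain ⟨a', ha', hza⟩ := hη.exists_eqOn_zero_left
    (ha.imp_right (Or.resolve_right · (hab.trans_le hbl).ne)) hab hG
  obtain ⟨b', hb', hzb⟩ := hη.exists_eqOn_zero_right
    (hb.imp_right (Or.resolve_left · (h0a.trans_lt hab).ne')) hab hG
  have hB : ∀ y ∈ Bset lam h,
      (Ioo a b).indicator η y = 0 ∧ deriv ((Ioo a b).indicator η) y = 0 :=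
    fun y hy ↦
      have hy' : y ∉ Ioo a b := fun hyab ↦ (hG hyab).2 hy
      ⟨indicator_of_notMem hy' η, deriv_indicator_Ioo_of_notMem hy'⟩
  refine ⟨⟨⟨contDiffOn_indicator_Ioo ha' hb' hη.1.1.1 hza hzb,
    intervalIntegrable_sq_d2_indicator measurableSet_Ioo ((convex_Ioo a b).addHaar_frontier _)
      hη.1.1.2⟩,
    indicator_of_notMem (fun h0 ↦ h0a.not_gt h0.1) η,
    indicator_of_notMem (fun hl ↦ hbl.not_gt hl.2) η,
    fun y hy ↦ (hB y hy).2.ge, fun yc hyc ↦ (hB yc ⟨hyc.1, hyc.2.1⟩).1⟩, hB⟩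

theorem secVar_indicator_Ioo (eps : ℝ) (Mst : ℝ → ℝ) (hlam : 0 ≤ lam)
    (hsub : Ioo a b ⊆ Ioc 0 lam) :
    secVar eps lam Mst h ((Ioo a b).indicator η)
      = ∫ y in Ioo a b, secVarDensity eps Mst h η y := by
  rw [secVar_eq_integral_secVarDensity, intervalIntegral.integral_of_le hlam,
    integral_congr_ae (ae_restrict_of_ae
      (secVarDensity_indicator_ae ((convex_Ioo a b).addHaar_frontier _) eps Mst h η)),
    setIntegral_indicator measurableSet_Ioo, inter_eq_self_of_subset_right hsub]

end Pieces

theorem sum_secVar_indicator_le {eps lam : ℝ} (hlam : 0 < lam) {Mst h η : ℝ → ℝ}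
    (hM : Continuous Mst) (hh : MemH2 lam h) {ι : Type*} [Fintype ι] {r s : ι → ℝ}
    (hrs : ∀ i, r i < s i) (hG : ∀ i, Ioo (r i) (s i) ⊆ Gset lam h)
    (hdisj : Pairwise (Disjoint on fun i ↦ Ioo (r i) (s i)))
    (hcover : ⋃ i, Ioo (r i) (s i) = Gset lam h) (hη : memS lam h η) :
    ∑ i, secVar eps lam Mst h ((Ioo (r i) (s i)).indicator η) ≤ secVar eps lam Mst h η := by
  have hsub : ∀ i, Ioo (r i) (s i) ⊆ Ioc 0 lam := fun i y hy ↦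
    have hrsl := nonneg_and_le_of_Ioo_subset_Gset (hrs i) (hG i)
    ⟨hrsl.1.trans_lt hy.1, hy.2.le.trans hrsl.2⟩
  have hint := integrableOn_secVarDensity (eps := eps) hlam hM hh hη.1.1
  have hBset : ∀ y ∈ Ioc 0 lam \ ⋃ i, Ioo (r i) (s i), y ∈ Bset lam h := fun y hy ↦
    by_contra fun hB ↦ hy.2 (hcover ▸ ⟨Ioc_subset_Icc_self hy.1, hB⟩)
  calc ∑ i, secVar eps lam Mst h ((Ioo (r i) (s i)).indicator η)
      = ∑ i, ∫ y in Ioo (r i) (s i), secVarDensity eps Mst h η y :=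
        Finset.sum_congr rfl fun i _ ↦ secVar_indicator_Ioo eps Mst hlam.le (hsub i)
    _ = ∫ y in ⋃ i, Ioo (r i) (s i), secVarDensity eps Mst h η y :=
        (integral_iUnion_fintype (fun _ ↦ measurableSet_Ioo) hdisj
          fun i ↦ hint.mono_set (hsub i)).symm
    _ ≤ ∫ y in Ioc 0 lam, secVarDensity eps Mst h η y :=
        setIntegral_le_setIntegral_of_nonneg_on_sdiff (.iUnion fun _ ↦ measurableSet_Ioo)
          measurableSet_Ioc (iUnion_subset hsub) hint
          fun y hy ↦ secVarDensity_nonneg_of_deriv_eq_zero (hη.2 y (hBset y hy)).2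
    _ = secVar eps lam Mst h η := by
        rw [secVar_eq_integral_secVarDensity, intervalIntegral.integral_of_le hlam.le]

theorem stmt11_general
    (eps lam : ℝ) (hlam : 0 < lam)
    (Wst Sst Mst : ℝ → ℝ) (hW : ContDiff ℝ 2 Wst)
    (hS : ∀ H : ℝ, HasDerivAt Wst (Sst H) H)
    (hM : ∀ H : ℝ, HasDerivAt Sst (Mst H) H)
    (h : ℝ → ℝ) (hh : memK lam h)
    (N : ℕ) (r s : Fin N → ℝ)
    (hGsub : ∀ i, Ioo (r i) (s i) ⊆ Gset lam h)
    (hGne : ∀ i, r i < s i)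
    (hGdisj : ∀ i j, i ≠ j → Disjoint (Ioo (r i) (s i)) (Ioo (r j) (s j)))
    (hends : ∀ i, (CrackFace lam h (r i) ∨ r i = 0 ∨ r i = lam) ∧
                  (CrackFace lam h (s i) ∨ s i = 0 ∨ s i = lam))
    (hcover : (⋃ i, Ioo (r i) (s i)) = Gset lam h)
    (hstab : ∀ i, ∀ η : ℝ → ℝ, memS lam h η →
      Function.support η ⊆ Icc (r i) (s i) →
      (∃ y ∈ Icc (0:ℝ) lam, η y ≠ 0) →
      0 < secVar eps lam Mst h η) :
    (∀ η : ℝ → ℝ, memS lam h η → (∃ y ∈ Icc (0:ℝ) lam, η y ≠ 0) →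
      0 < secVar eps lam Mst h η) ∧
    (∀ η : ℝ → ℝ, memS lam h η →
      (∑ i, secVar eps lam Mst h ((Ioo (r i) (s i)).indicator η))
        ≤ secVar eps lam Mst h η) := by
  have hle (η : ℝ → ℝ) (hη : memS lam h η) := sum_secVar_indicator_le (eps := eps) hlam
    (continuous_of_hasDerivAt_of_contDiff_two hW hS hM) hh.1 hGne hGsub hGdisj hcover hη
  refine ⟨fun η hη ⟨y, hy, hηy⟩ ↦ ?_, hle⟩
  obtain ⟨i, hi⟩ := mem_iUnion.1 (hcover ▸ ⟨hy, fun hB ↦ hηy (hη.2 y hB).1⟩ :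
    y ∈ ⋃ i, Ioo (r i) (s i))
  have hstab_piece (j : Fin N) := hstab j _
    (memS_indicator_Ioo (hGne j) (hGsub j) (hends j).1 (hends j).2 hη)
    (support_indicator_subset.trans Ioo_subset_Icc_self)
  calc 0 < ∑ j, secVar eps lam Mst h ((Ioo (r j) (s j)).indicator η) :=
        Finset.sum_pos'
          (fun j _ ↦ secVar_nonneg_of_pos
            (support_indicator_subset.trans ((hGsub j).trans sdiff_subset)) (hstab_piece j))
          ⟨i, Finset.mem_univ i, hstab_piece i ⟨y, hy, by rwa [indicator_of_mem hi]⟩⟩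
    _ ≤ secVar eps lam Mst h η := hle η hη

/-- Corollary 4.3: if each unbroken part `G_i` is independently
stable (positive second variation for nonzero variations in `𝒮_h` supported in
`closure G_i`), then the second variation is positive on all nonzero
`η ∈ 𝒮_h`; moreover the second variation dominates the sum of the second
variations of the restrictions `η·1_{G_i}`. -/
theorem stmt11
    (eps lam : ℝ) (heps : 0 < eps) (hlam : 0 < lam)
    (Wst Sst Mst : ℝ → ℝ) (hW : ContDiff ℝ 2 Wst)
    (hS : ∀ H : ℝ, HasDerivAt Wst (Sst H) H)
    (hM : ∀ H : ℝ, HasDerivAt Sst (Mst H) H)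
    (h : ℝ → ℝ) (hh : memK lam h)
    (μ : Measure ℝ) (hEL : EulerLagrange eps lam Sst h μ)
    (N : ℕ) (r s : Fin N → ℝ)
    (hGsub : ∀ i, Ioo (r i) (s i) ⊆ Gset lam h)
    (hGne : ∀ i, r i < s i)
    (hGdisj : ∀ i j, i ≠ j → Disjoint (Ioo (r i) (s i)) (Ioo (r j) (s j)))
    (hends : ∀ i, (CrackFace lam h (r i) ∨ r i = 0 ∨ r i = lam) ∧
                  (CrackFace lam h (s i) ∨ s i = 0 ∨ s i = lam))
    (hcover : (⋃ i, Ioo (r i) (s i)) = Gset lam h)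
    (hstab : ∀ i, ∀ η : ℝ → ℝ, memS lam h η →
      Function.support η ⊆ Icc (r i) (s i) →
      (∃ y ∈ Icc (0:ℝ) lam, η y ≠ 0) →
      0 < secVar eps lam Mst h η) :
    (∀ η : ℝ → ℝ, memS lam h η → (∃ y ∈ Icc (0:ℝ) lam, η y ≠ 0) →
      0 < secVar eps lam Mst h η) ∧
    (∀ η : ℝ → ℝ, memS lam h η →
      (∑ i, secVar eps lam Mst h ((Ioo (r i) (s i)).indicator η))
        ≤ secVar eps lam Mst h η) :=
  stmt11_general eps lam hlam Wst Sst Mst hW hS hM h hh N r s hGsub hGne hGdisj hends hcover hstab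

end
end

section
/- (Double-well structure of the transformed energy) If W satisfies hypotheses (H), then the transformed density W*(H) = H·W(1/H) satisfies: W*(1) = 0; W*(H) > 0 for every H ∈ (0,∞) with H ≠ 1; lim_{H→0⁺} W*(H) = 0, so that setting W*(0) := 0 makes W* continuous on [0,∞) with zeros (wells) exactly at H = 0 and H = 1; and lim_{H→∞} W*(H) = ∞. -/
/-!
The substitution `F = 1 / H` swaps the two ends of `(0, ∞)`. As `H → 0⁺`, `W (1 / H) → γ` stays
bounded, so the factor `H` drives `W*` to `0`; as `H → ∞`, both `H` and `W (1 / H)` blow up.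
Positivity and the wells at `0` and `1` are inherited pointwise from those of `W`.
-/

open Set MeasureTheory Filter

noncomputable section

section Wstar

variable {W : ℝ → ℝ}

@[simp]
theorem Wstar_zero : Wstar W 0 = 0 := by
  simp [Wstar]

theorem Wstar_one (hW1 : W 1 = 0) : Wstar W 1 = 0 := by
  simp [Wstar, hW1]

theorem Wstar_pos (hWpos : ∀ F : ℝ, 0 < F → F ≠ 1 → 0 < W F) {H : ℝ} (hH : 0 < H)
    (hH1 : H ≠ 1) : 0 < Wstar W H :=
  mul_pos hH (hWpos _ (one_div_pos.mpr hH) (by rwa [Ne, div_eq_one_iff_eq hH.ne', eq_comm]))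

theorem Wstar_eq_zero_iff (hW1 : W 1 = 0) (hWpos : ∀ F : ℝ, 0 < F → F ≠ 1 → 0 < W F)
    {H : ℝ} (hH : 0 ≤ H) : Wstar W H = 0 ↔ H = 0 ∨ H = 1 := by
  refine ⟨fun hzero => ?_, ?_⟩
  · by_contra! hne
    exact (Wstar_pos hWpos (hH.lt_of_ne' hne.1) hne.2).ne' hzero
  · rintro (rfl | rfl)
    exacts [Wstar_zero, Wstar_one hW1]

theorem tendsto_Wstar_nhdsGT_zero (hbdd : IsBoundedUnder (· ≤ ·) atTop (fun F => ‖W F‖)) :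
    Tendsto (Wstar W) (nhdsWithin 0 (Ioi 0)) (nhds 0) := by
  have hinv : Tendsto (fun H : ℝ => 1 / H) (nhdsWithin 0 (Ioi 0)) atTop := by
    simpa only [one_div] using tendsto_inv_nhdsGT_zero
  exact (tendsto_nhdsWithin_of_tendsto_nhds tendsto_id).zero_mul_isBoundedUnder_le
    (hinv.isBoundedUnder_comp hbdd)

theorem continuousOn_Wstar_Ioi (hW : ContinuousOn W (Ioi 0)) :
    ContinuousOn (Wstar W) (Ioi 0) := fun H (hH : 0 < H) =>
  (continuousAt_id.mul ((hW.continuousAt (Ioi_mem_nhds (one_div_pos.mpr hH))).comp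
    (continuousAt_const.div continuousAt_id hH.ne'))).continuousWithinAt

theorem continuousOn_Wstar_Ici (hW : ContinuousOn W (Ioi 0))
    (hbdd : IsBoundedUnder (· ≤ ·) atTop (fun F => ‖W F‖)) :
    ContinuousOn (Wstar W) (Ici 0) := by
  intro H hH
  rcases (mem_Ici.mp hH).eq_or_lt with rfl | hpos
  · rw [← continuousWithinAt_Ioi_iff_Ici, ContinuousWithinAt, Wstar_zero]
    exact tendsto_Wstar_nhdsGT_zero hbdd
  · exact ((continuousOn_Wstar_Ioi hW).continuousAt (Ioi_mem_nhds hpos)).continuousWithinAt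

theorem tendsto_Wstar_atTop (hW0 : Tendsto W (nhdsWithin 0 (Ioi 0)) atTop) :
    Tendsto (Wstar W) atTop atTop := by
  have hinv : Tendsto (fun H : ℝ => 1 / H) atTop (nhdsWithin 0 (Ioi 0)) := by
    simpa only [one_div] using tendsto_inv_atTop_nhdsGT_zero
  exact tendsto_id.atTop_mul_atTop₀ (hW0.comp hinv)

end Wstar

/-- double-well structure of the transformed energy: under
hypotheses (H), `W*(1) = 0`, `W* > 0` on `(0,∞)∖{1}`, `W*(H) → 0` as `H → 0⁺`
(so the extension by `W*(0) = 0` is continuous on `[0,∞)` with wells exactly at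
`0` and `1`), and `W*(H) → ∞` as `H → ∞`. -/
theorem stmt18 (γ : ℝ) (W : ℝ → ℝ) (hW : HypW W γ) :
    Wstar W 1 = 0 ∧
    (∀ H : ℝ, 0 < H → H ≠ 1 → 0 < Wstar W H) ∧
    Tendsto (Wstar W) (nhdsWithin 0 (Ioi 0)) (nhds 0) ∧
    Wstar W 0 = 0 ∧
    ContinuousOn (Wstar W) (Ici 0) ∧
    (∀ H ∈ Ici (0:ℝ), (Wstar W H = 0 ↔ H = 0 ∨ H = 1)) ∧
    Tendsto (Wstar W) atTop atTop := by
  obtain ⟨hC2, hW0, hWγ, -, -, hW1, hWpos⟩ := hW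
  have hbdd : IsBoundedUnder (· ≤ ·) atTop (fun F => ‖W F‖) := hWγ.norm.isBoundedUnder_le
  exact ⟨Wstar_one hW1, fun _ => Wstar_pos hWpos, tendsto_Wstar_nhdsGT_zero hbdd, Wstar_zero,
    continuousOn_Wstar_Ici hC2.continuousOn hbdd, fun _ hH => Wstar_eq_zero_iff hW1 hWpos hH,
    tendsto_Wstar_atTop hW0⟩

end
end
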